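/- Let P be a permutation matrix and let t, n ≥ 1 be integers with N = tn. Then S_P(N) ≤ |T_n(P)| · (t!)^n · (ex(n,P)/n)^N, where S_P(N) is the number of N×N permutation matrices avoiding P, T_n(P) is the set of n×n 0-1 matrices avoiding P, and ex(n,P) is the maximum number of ones in an n×n 0-1 matrix avoiding P. -/

import Mathlib

open Filter

noncomputable section

/-- An `n × n` 0-1 matrix `A` contains the `k × k` pattern `P` if there are strictly
increasing rows and columns selecting a submatrix that dominates `P`. -/
def Contains {k n : ℕ} (P : Matrix (Fin k) (Fin k) Bool)
    (A : Matrix (Fin n) (Fin n) Bool) : Prop :=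
  ∃ r : Fin k → Fin n, ∃ c : Fin k → Fin n,
    StrictMono r ∧ StrictMono c ∧ ∀ i j, P i j = true → A (r i) (c j) = true

/-- `A` avoids the pattern `P`. -/
def Avoids {k n : ℕ} (P : Matrix (Fin k) (Fin k) Bool)
    (A : Matrix (Fin n) (Fin n) Bool) : Prop := ¬ Contains P A

/-- The permutation matrix of a permutation. -/
def permMatrix {n : ℕ} (σ : Equiv.Perm (Fin n)) : Matrix (Fin n) (Fin n) Bool :=
  fun i j => decide (σ i = j)

/-- `A` is a permutation matrix. -/
def IsPermMatrix {n : ℕ} (A : Matrix (Fin n) (Fin n) Bool) : Prop :=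
  ∃ σ : Equiv.Perm (Fin n), A = permMatrix σ

/-- Number of ones of a 0-1 matrix. -/
def numOnes {m n : ℕ} (A : Matrix (Fin m) (Fin n) Bool) : ℕ :=
  (Finset.univ.filter fun p : Fin m × Fin n => A p.1 p.2 = true).card

/-- `SW P n = S_P(n)`, the number of `n × n` permutation matrices avoiding `P`. -/
def SW {k : ℕ} (P : Matrix (Fin k) (Fin k) Bool) (n : ℕ) : ℕ :=
  Nat.card {A : Matrix (Fin n) (Fin n) Bool // IsPermMatrix A ∧ Avoids P A}

/-- `exFH P n = ex(n, P)`, the maximum number of ones in an `n × n` 0-1 matrix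
avoiding `P`. -/
def exFH {k : ℕ} (P : Matrix (Fin k) (Fin k) Bool) (n : ℕ) : ℕ :=
  sSup {m : ℕ | ∃ A : Matrix (Fin n) (Fin n) Bool, Avoids P A ∧ numOnes A = m}

/-- `F c = inf over positive integers t of (t!)^(1/t) * 15^(c/t) / c`. -/
def F (c : ℝ) : ℝ :=
  ⨅ t : ℕ+, ((t : ℕ).factorial : ℝ) ^ ((1 : ℝ) / (t : ℕ)) * (15 : ℝ) ^ (c / (t : ℕ)) / c

/-- The block (among `n` consecutive blocks of length `t`) containing a given
index of `Fin (t * n)`. -/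
def blockOf {t n : ℕ} (ht : 0 < t) (i : Fin (t * n)) : Fin n :=
  ⟨(i : ℕ) / t, by
    rw [Nat.div_lt_iff_lt_mul ht]
    exact lt_of_lt_of_le i.isLt (le_of_eq (mul_comm t n))⟩

open Classical in
/-- The `t`-contraction of an `(t*n) × (t*n)` 0-1 matrix: entry `(a,b)` is 1 iff
the block `I_a × I_b` contains a one. -/
def contMat {t n : ℕ} (ht : 0 < t) (A : Matrix (Fin (t * n)) (Fin (t * n)) Bool) :
    Matrix (Fin n) (Fin n) Bool :=
  fun a b => decide (∃ i j, blockOf ht i = a ∧ blockOf ht j = b ∧ A i j = true)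

end


/-!
Contracting every `t × t` block of a `P`-avoiding `tn × tn` permutation matrix to a single entry
gives a `P`-avoiding `n × n` matrix `B`; this uses that `P` is itself a permutation matrix. A
permutation `σ` with contraction `B` is determined by recording, for each `i`, the column block
of `σ i` (a one of `B` in the row block of `i`) and the offset of `σ i` inside that block (injective
on each column block). Hence at most `(∏ᵢ dᵢ) · (t!)^n` permutations contract to `B`, where `dᵢ`
is the number of ones of `B` in the row block of `i`, and by AM–GM
`∏ᵢ dᵢ ≤ (|B| / n)^{tn} ≤ (ex(n,P) / n)^{tn}`.
-/

open Finset
open scoped Nat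

lemma blockOf_lt_of_lt {t n : ℕ} (ht : 0 < t) {i j : Fin (t * n)}
    (h : blockOf ht i < blockOf ht j) : i < j :=
  Fin.lt_def.mpr (Nat.lt_of_div_lt_div h)

theorem avoids_contMat {k t n : ℕ} {P : Matrix (Fin k) (Fin k) Bool} (hP : IsPermMatrix P)
    (ht : 0 < t) {A : Matrix (Fin (t * n)) (Fin (t * n)) Bool} (hA : Avoids P A) :
    Avoids P (contMat ht A) := by
  obtain ⟨π, rfl⟩ := hP
  rintro ⟨r, c, hr, hc, hcont⟩
  have hwit : ∀ i, ∃ x y, blockOf ht x = r i ∧ blockOf ht y = c (π i) ∧ A x y = true :=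
    fun i => by simpa [contMat] using hcont i (π i) (by simp [permMatrix])
  choose x y hx hy hxy using hwit
  -- One witness per one of `P` suffices since `P` has a single one in each row and column.
  refine hA ⟨x, y ∘ π.symm, fun i i' h => blockOf_lt_of_lt ht ?_,
    fun j j' h => blockOf_lt_of_lt ht ?_, fun i j hij => ?_⟩
  · rw [hx, hx]
    exact hr h
  · simp only [Function.comp_apply, hy, Equiv.apply_symm_apply]
    exact hc h
  · obtain rfl : π i = j := by simpa [permMatrix] using hij
    simpa using hxy i

/-- `i ↦ (i / t, i % t)`: the block of `i` and its position inside the block. -/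
def blockEquiv (t n : ℕ) : Fin (t * n) ≃ Fin n × Fin t :=
  (finCongr (mul_comm t n)).trans finProdFinEquiv.symm

lemma blockEquiv_fst {t n : ℕ} (ht : 0 < t) (i : Fin (t * n)) :
    (blockEquiv t n i).1 = blockOf ht i :=
  rfl

lemma Nat.descFactorial_le_factorial (n k : ℕ) : n.descFactorial k ≤ n ! := by
  rcases le_or_gt k n with hkn | hnk
  · exact Nat.le_of_dvd n.factorial_pos
      ⟨_, (Nat.factorial_mul_descFactorial hkn).symm.trans (mul_comm _ _)⟩
  · simp [Nat.descFactorial_eq_zero_iff_lt.mpr hnk]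

lemma card_injOn_fibers_le {α β γ : Type*} [Fintype α] [Fintype β] [Fintype γ] (f : α → β) :
    Nat.card {g : α → γ // ∀ b, Set.InjOn g (f ⁻¹' {b})} ≤ (Nat.card γ)! ^ Nat.card β := by
  classical
  let restrict : {g : α → γ // ∀ b, Set.InjOn g (f ⁻¹' {b})} → ∀ b, {a // f a = b} ↪ γ :=
    fun g b => ⟨fun a => g.1 a, fun a a' h => Subtype.ext (g.2 b a.2 a'.2 h)⟩
  have hrestrict : Function.Injective restrict := fun g g' h =>
    Subtype.ext (funext fun a => DFunLike.congr_fun (congrFun h (f a)) ⟨a, rfl⟩)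
  calc _ ≤ Nat.card (∀ b, {a // f a = b} ↪ γ) := Nat.card_le_card_of_injective _ hrestrict
    _ = ∏ b, (Nat.card γ).descFactorial (Nat.card {a // f a = b}) := by
      simp [Nat.card_eq_fintype_card, Fintype.card_embedding_eq]
    _ ≤ ∏ _b : β, (Nat.card γ)! :=
      prod_le_prod' fun b _ => Nat.descFactorial_le_factorial _ _
    _ = _ := by simp [Nat.card_eq_fintype_card]

lemma card_injective_fst_mem_le {α β γ : Type*} [Fintype α] [Fintype β] [Fintype γ]
    (s : α → Finset β) :
    Nat.card {h : α → β × γ // Function.Injective h ∧ ∀ a, (h a).1 ∈ s a}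
      ≤ (∏ a, #(s a)) * (Nat.card γ)! ^ Nat.card β := by
  classical
  let split : {h : α → β × γ // Function.Injective h ∧ ∀ a, (h a).1 ∈ s a} →
      Σ f : (∀ a, s a), {g : α → γ // ∀ b, Set.InjOn g ((fun a => (f a : β)) ⁻¹' {b})} :=
    fun h => ⟨fun a => ⟨(h.1 a).1, h.2.2 a⟩, fun a => (h.1 a).2,
      fun _ _ ha _ ha' hg => h.2.1 (Prod.ext (ha.trans ha'.symm) hg)⟩
  have hsplit : Function.Injective split := fun h h' e => Subtype.ext <| funext fun a =>
    Prod.ext (congrArg Subtype.val (congrFun (congrArg Sigma.fst e) a))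
      (congrFun (congrArg (fun x => x.2.1) e) a)
  calc _ ≤ _ := Nat.card_le_card_of_injective split hsplit
    _ = ∑ f : (∀ a, s a), Nat.card {g : α → γ // ∀ b, Set.InjOn g ((fun a => (f a : β)) ⁻¹' {b})} :=
      Nat.card_sigma
    _ ≤ ∑ _f : (∀ a, s a), (Nat.card γ)! ^ Nat.card β :=
      sum_le_sum fun f _ => card_injOn_fibers_le _
    _ = _ := by simp [Fintype.card_pi]

lemma contMat_permMatrix_blockOf {t n : ℕ} (ht : 0 < t) (σ : Equiv.Perm (Fin (t * n)))
    (i : Fin (t * n)) : contMat ht (permMatrix σ) (blockOf ht i) (blockOf ht (σ i)) = true := by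
  simp only [contMat, decide_eq_true_eq]
  exact ⟨i, σ i, rfl, rfl, by simp [permMatrix]⟩

lemma card_perm_contMat_eq_le {t n : ℕ} (ht : 0 < t) (B : Matrix (Fin n) (Fin n) Bool) :
    Nat.card {σ : Equiv.Perm (Fin (t * n)) // contMat ht (permMatrix σ) = B}
      ≤ (∏ i, #{b | B (blockOf ht i) b = true}) * t ! ^ n := by
  let encode : {σ : Equiv.Perm (Fin (t * n)) // contMat ht (permMatrix σ) = B} →
      {h : Fin (t * n) → Fin n × Fin t //
        Function.Injective h ∧ ∀ i, (h i).1 ∈ ({b | B (blockOf ht i) b = true} : Finset _)} :=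
    fun σ => ⟨blockEquiv t n ∘ σ.1, (blockEquiv t n).injective.comp σ.1.injective, fun i => by
      simpa [blockEquiv_fst ht, ← σ.2] using contMat_permMatrix_blockOf ht σ.1 i⟩
  have hencode : Function.Injective encode := fun σ τ h => Subtype.ext <| Equiv.ext fun i =>
    (blockEquiv t n).injective (congrFun (congrArg Subtype.val h) i)
  simpa using (Nat.card_le_card_of_injective encode hencode).trans (card_injective_fst_mem_le _)

lemma prod_le_mean_pow {ι : Type*} [Fintype ι] [Nonempty ι] (z : ι → ℝ) (hz : ∀ i, 0 ≤ z i) :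
    ∏ i, z i ≤ ((∑ i, z i) / Fintype.card ι) ^ Fintype.card ι := by
  have hamgm := Real.geom_mean_le_arith_mean univ (fun _ => 1) z (fun _ _ => zero_le_one)
    (by simpa using Fintype.card_pos) fun i _ => hz i
  simp only [Real.rpow_one, sum_const, card_univ, nsmul_eq_mul, mul_one, one_mul] at hamgm
  calc ∏ i, z i = ((∏ i, z i) ^ ((Fintype.card ι : ℝ)⁻¹)) ^ Fintype.card ι :=
        (Real.rpow_inv_natCast_pow (prod_nonneg fun i _ => hz i) Fintype.card_ne_zero).symm
    _ ≤ _ := by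
      gcongr
      exact Real.rpow_nonneg (prod_nonneg fun i _ => hz i) _

lemma numOnes_eq_sum_card_row {m n : ℕ} (A : Matrix (Fin m) (Fin n) Bool) :
    numOnes A = ∑ a, #{b | A a b = true} := by
  rw [numOnes, card_filter, Fintype.sum_prod_type]
  simp only [card_filter]

lemma numOnes_le_exFH {k n : ℕ} (P : Matrix (Fin k) (Fin k) Bool)
    {B : Matrix (Fin n) (Fin n) Bool} (hB : Avoids P B) : numOnes B ≤ exFH P n :=
  le_csSup ⟨n * n, by
    rintro _ ⟨A, _, rfl⟩
    simpa [numOnes] using card_filter_le (univ : Finset (Fin n × Fin n)) _⟩ ⟨B, hB, rfl⟩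

lemma prod_card_row_blockOf_le {t n : ℕ} (ht : 0 < t) (hn : 0 < n)
    (B : Matrix (Fin n) (Fin n) Bool) :
    ∏ i : Fin (t * n), (#{b | B (blockOf ht i) b = true} : ℝ) ≤ (numOnes B / n : ℝ) ^ (t * n) := by
  have : Nonempty (Fin n) := ⟨⟨0, hn⟩⟩
  calc ∏ i : Fin (t * n), (#{b | B (blockOf ht i) b = true} : ℝ)
      = ∏ p : Fin n × Fin t, (#{b | B p.1 b = true} : ℝ) :=
        Fintype.prod_equiv (blockEquiv t n) _ _ fun i => by rw [blockEquiv_fst ht]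
    _ = (∏ a, (#{b | B a b = true} : ℝ)) ^ t := by
        simp [Fintype.prod_prod_type, prod_pow]
    _ ≤ (((∑ a, (#{b | B a b = true} : ℝ)) / n) ^ n) ^ t := by
        gcongr
        simpa using prod_le_mean_pow (fun a : Fin n => (#{b | B a b = true} : ℝ))
          fun a => Nat.cast_nonneg _
    _ = (numOnes B / n : ℝ) ^ (t * n) := by
        rw [numOnes_eq_sum_card_row, ← pow_mul, mul_comm n t]
        push_cast
        rfl

lemma card_perm_contMat_eq_le_of_avoids {k t n : ℕ} {P : Matrix (Fin k) (Fin k) Bool}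
    (ht : 0 < t) (hn : 0 < n) {B : Matrix (Fin n) (Fin n) Bool} (hB : Avoids P B) :
    (Nat.card {σ : Equiv.Perm (Fin (t * n)) // contMat ht (permMatrix σ) = B} : ℝ)
      ≤ (t ! : ℝ) ^ n * (exFH P n / n : ℝ) ^ (t * n) := by
  calc (Nat.card {σ : Equiv.Perm (Fin (t * n)) // contMat ht (permMatrix σ) = B} : ℝ)
      ≤ (∏ i, (#{b | B (blockOf ht i) b = true} : ℝ)) * (t ! : ℝ) ^ n := by
        exact_mod_cast card_perm_contMat_eq_le ht B
    _ ≤ (numOnes B / n : ℝ) ^ (t * n) * (t ! : ℝ) ^ n := by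
        gcongr
        exact prod_card_row_blockOf_le ht hn B
    _ ≤ (exFH P n / n : ℝ) ^ (t * n) * (t ! : ℝ) ^ n := by
        gcongr
        exact_mod_cast numOnes_le_exFH P hB
    _ = _ := mul_comm _ _

lemma permMatrix_injective {n : ℕ} : Function.Injective (permMatrix (n := n)) := fun σ τ h =>
  Equiv.ext fun i => by simpa [permMatrix] using congrFun (congrFun h i) (τ i)

lemma SW_eq_card_perm {k N : ℕ} (P : Matrix (Fin k) (Fin k) Bool) :
    SW P N = Nat.card {σ : Equiv.Perm (Fin N) // Avoids P (permMatrix σ)} := by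
  refine (Nat.card_eq_of_bijective (fun σ => ⟨permMatrix σ.1, ⟨σ.1, rfl⟩, σ.2⟩)
    ⟨fun σ τ h => Subtype.ext (permMatrix_injective (congrArg Subtype.val h)), ?_⟩).symm
  rintro ⟨_, ⟨σ, rfl⟩, hσ⟩
  exact ⟨⟨σ, hσ⟩, rfl⟩

theorem SW_le_card_mul {k : ℕ} (P : Matrix (Fin k) (Fin k) Bool)
    (hP : IsPermMatrix P) (t n : ℕ) (ht : 0 < t) (hn : 0 < n) :
    (SW P (t * n) : ℝ) ≤
      (Nat.card {B : Matrix (Fin n) (Fin n) Bool // Avoids P B} : ℝ) *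
        (t.factorial : ℝ) ^ n * ((exFH P n : ℝ) / n) ^ (t * n) := by
  classical
  let T := {B : Matrix (Fin n) (Fin n) Bool // Avoids P B}
  let fiber (B : T) := {σ : Equiv.Perm (Fin (t * n)) // contMat ht (permMatrix σ) = B.1}
  have hsplit : SW P (t * n) ≤ ∑ B : T, Nat.card (fiber B) := by
    rw [SW_eq_card_perm, ← Nat.card_sigma]
    exact Nat.card_le_card_of_injective (fun σ => ⟨⟨_, avoids_contMat hP ht σ.2⟩, σ.1, rfl⟩)
      fun σ τ h => Subtype.ext (congrArg (fun x => x.2.1) h)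
  calc (SW P (t * n) : ℝ)
      ≤ ∑ B : T, (Nat.card (fiber B) : ℝ) := by exact_mod_cast hsplit
    _ ≤ ∑ _B : T, (t ! : ℝ) ^ n * (exFH P n / n : ℝ) ^ (t * n) :=
        sum_le_sum fun B _ => card_perm_contMat_eq_le_of_avoids ht hn B.2
    _ = _ := by simp [T, Nat.card_eq_fintype_card, mul_assoc]
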